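/- arXiv:1008.0227 — 3 statements merged into one kernel-verified Lean document; each statement's English description precedes it below -/
import Mathlib

section
/- Let Δ ≥ 2 be the maximum vertex degree of G. If the arrival rate vector satisfies ν ∈ (1/Δ)Λ°, and λ is a vector of fugacities such that s_i(λ) = ν_i for all links i, then λ_i ≤ 1/(Δ−1) for every i. -/
open Finset

variable {V : Type*} [Fintype V] [DecidableEq V]

/-- A finite set of vertices is independent in `G`. -/
def IsInd (G : SimpleGraph V) [DecidableRel G.Adj] (s : Finset V) : Prop :=
  ∀ v ∈ s, ∀ w ∈ s, ¬ G.Adj v w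

instance (G : SimpleGraph V) [DecidableRel G.Adj] (s : Finset V) :
    Decidable (IsInd G s) := by
  unfold IsInd; infer_instance

/-- The indicator vector of a finite set of vertices. -/
def indVec (s : Finset V) : V → ℝ := fun v => if v ∈ s then 1 else 0

/-- The set `Ω` of feasible schedules, as indicator vectors of independent sets. -/
def schedSet (G : SimpleGraph V) [DecidableRel G.Adj] : Set (V → ℝ) :=
  {x | ∃ s : Finset V, IsInd G s ∧ x = indVec s}

/-- `Co(Ω)`: the convex hull of the feasible schedules. -/
def coSched (G : SimpleGraph V) [DecidableRel G.Adj] : Set (V → ℝ) :=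
  convexHull ℝ (schedSet G)

/-- The capacity region `Λ° = {ν ≥ 0 : ∃ μ ∈ Co(Ω), ν < μ}`. -/
def capIntr (G : SimpleGraph V) [DecidableRel G.Adj] : Set (V → ℝ) :=
  {ν | (∀ i, 0 ≤ ν i) ∧ ∃ μ ∈ coSched G, ∀ i, ν i < μ i}

/-- `Λ = {ν ≥ 0 : ν ∈ Co(Ω)}`. -/
def capCl (G : SimpleGraph V) [DecidableRel G.Adj] : Set (V → ℝ) :=
  {ν | (∀ i, 0 ≤ ν i) ∧ ν ∈ coSched G}

/-- The product-form distribution on independent sets with fugacities `lam`. -/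
noncomputable def prodForm (G : SimpleGraph V) [DecidableRel G.Adj]
    (lam : V → ℝ) (σ : Finset V) : ℝ :=
  if IsInd G σ then
    (∏ v ∈ σ, lam v) / (∑ σ' ∈ univ.filter (fun s => IsInd G s), ∏ v ∈ σ', lam v)
  else 0

/-- The stationary service rate of link `i` under the product-form distribution. -/
noncomputable def serviceRate (G : SimpleGraph V) [DecidableRel G.Adj]
    (lam : V → ℝ) (i : V) : ℝ :=
  ∑ σ ∈ univ.filter (fun s : Finset V => i ∈ s), prodForm G lam σ

/-- The concave function `F(r;ν) = Σ_i ν_i r_i − log Σ_{σ∈Ω} exp(Σ_{i∈σ} r_i)`. -/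
noncomputable def Ffun (G : SimpleGraph V) [DecidableRel G.Adj]
    (r ν : V → ℝ) : ℝ :=
  ∑ i : V, ν i * r i -
    Real.log (∑ σ ∈ univ.filter (fun s => IsInd G s), Real.exp (∑ i ∈ σ, r i))

/-- The interference degree of a vertex: the maximum number of members of its
neighborhood that can be simultaneously active (i.e. the maximum size of an
independent subset of its neighborhood). -/
def intDeg (G : SimpleGraph V) [DecidableRel G.Adj] (i : V) : ℕ :=
  (((G.neighborFinset i).powerset.filter (fun s => IsInd G s)).sup Finset.card)

/-- The interference degree of the graph. -/
def intDegG (G : SimpleGraph V) [DecidableRel G.Adj] : ℕ :=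
  univ.sup (intDeg G)

/-!
Let `Z` be the partition function and `B` the weight of the independent sets avoiding `i` and
its neighbours. Deleting `i` is a bijection from the independent sets containing `i` onto those,
so `λ_i B = s_i Z`; a union bound over the closed neighbourhood gives
`Z ≤ B + Z (s_i + ∑_{j ~ i} s_j)`. Together, `λ_i (1 - s_i - ∑_{j ~ i} s_j) ≤ s_i`.
Every schedule, hence every point of `Co(Ω)`, satisfies `∑_{j ~ i} x_j + Δ x_i ≤ Δ`, so
`ν ∈ (1/Δ)Λ°` forces `∑_{j ~ i} ν_j + Δ ν_i < 1`, i.e.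
`1 - ν_i - ∑_{j ~ i} ν_j > (Δ - 1) ν_i`, and therefore `λ_i < 1/(Δ - 1)`.
-/

section UnionBound

variable {α M : Type*} [DecidableEq α] [AddCommMonoid M] [PartialOrder M] [IsOrderedAddMonoid M]

theorem Finset.sum_le_sum_filter_disjoint_add_sum_sum_filter_mem (S : Finset (Finset α))
    (K : Finset α) {f : Finset α → M} (hf : ∀ σ ∈ S, 0 ≤ f σ) :
    ∑ σ ∈ S, f σ ≤
      ∑ σ ∈ S with Disjoint σ K, f σ + ∑ j ∈ K, ∑ σ ∈ S with j ∈ σ, f σ := by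
  have hterm : ∀ σ ∈ S, ∀ j, 0 ≤ if j ∈ σ then f σ else 0 := fun σ hσ _ =>
    ite_nonneg (hf σ hσ) le_rfl
  rw [← sum_filter_add_sum_filter_not S (Disjoint · K)]
  gcongr
  calc ∑ σ ∈ S with ¬Disjoint σ K, f σ
      ≤ ∑ σ ∈ S with ¬Disjoint σ K, ∑ j ∈ K, if j ∈ σ then f σ else 0 := by
        gcongr with σ hσ
        obtain ⟨hσS, hmeet⟩ := mem_filter.mp hσ
        obtain ⟨j, hjσ, hjK⟩ := not_disjoint_iff.mp hmeet
        calc f σ = if j ∈ σ then f σ else 0 := (if_pos hjσ).symm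
          _ ≤ _ := single_le_sum (f := fun j => if j ∈ σ then f σ else 0)
            (fun k _ => hterm σ hσS k) hjK
    _ ≤ ∑ σ ∈ S, ∑ j ∈ K, if j ∈ σ then f σ else 0 :=
        sum_le_sum_of_subset_of_nonneg (filter_subset _ _)
          fun σ hσ _ => sum_nonneg fun j _ => hterm σ hσ j
    _ = ∑ j ∈ K, ∑ σ ∈ S with j ∈ σ, f σ := by
        rw [sum_comm]
        simp_rw [sum_filter]

end UnionBound

theorem IsInd.insert {G : SimpleGraph V} [DecidableRel G.Adj] {s : Finset V} {i : V}
    (hs : IsInd G s) (hi : Disjoint s (G.neighborFinset i)) : IsInd G (insert i s) := by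
  have hnadj : ∀ j ∈ s, ¬G.Adj i j := fun j hj hij =>
    disjoint_left.mp hi hj ((G.mem_neighborFinset i j).mpr hij)
  intro v hv w hw hvw
  rcases mem_insert.mp hv with hvi | hv <;> rcases mem_insert.mp hw with hwi | hw
  · exact G.ne_of_adj hvw (hvi.trans hwi.symm)
  · exact hnadj w hw (hvi ▸ hvw)
  · exact hnadj v hv (hwi ▸ hvw.symm)
  · exact hs v hv w hw hvw

section HardCore

variable (G : SimpleGraph V) [DecidableRel G.Adj]

def indepSets : Finset (Finset V) := univ.filter (fun s => IsInd G s)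

theorem empty_mem_indepSets : ∅ ∈ indepSets G :=
  mem_filter.mpr ⟨mem_univ _, fun v hv => absurd hv (notMem_empty v)⟩

def partitionFn (lam : V → ℝ) : ℝ := ∑ σ ∈ indepSets G, ∏ v ∈ σ, lam v

def activeWeight (lam : V → ℝ) (i : V) : ℝ :=
  ∑ σ ∈ indepSets G with i ∈ σ, ∏ v ∈ σ, lam v

def freeWeight (lam : V → ℝ) (i : V) : ℝ :=
  ∑ σ ∈ indepSets G with Disjoint σ (insert i (G.neighborFinset i)), ∏ v ∈ σ, lam v

theorem one_le_partitionFn {lam : V → ℝ} (hlam : ∀ v, 0 ≤ lam v) :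
    1 ≤ partitionFn G lam := by
  simpa [partitionFn] using single_le_sum (f := fun σ => ∏ v ∈ σ, lam v)
    (fun σ _ => prod_nonneg fun v _ => hlam v) (empty_mem_indepSets G)

theorem serviceRate_eq_div (lam : V → ℝ) (i : V) :
    serviceRate G lam i = activeWeight G lam i / partitionFn G lam := by
  unfold serviceRate prodForm activeWeight partitionFn indepSets
  rw [← sum_filter, filter_comm, ← sum_div]

theorem activeWeight_eq_mul_freeWeight (lam : V → ℝ) (i : V) :
    activeWeight G lam i = lam i * freeWeight G lam i := by
  rw [activeWeight, freeWeight, mul_sum]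
  refine sum_nbij' (fun σ => σ.erase i) (fun τ => insert i τ) ?_ ?_ ?_ ?_ ?_
  · intro σ hσ
    simp only [indepSets, mem_filter, mem_univ, true_and] at hσ ⊢
    obtain ⟨hσ, hi⟩ := hσ
    refine ⟨fun v hv w hw => hσ v (mem_of_mem_erase hv) w (mem_of_mem_erase hw),
      disjoint_insert_right.mpr ⟨notMem_erase i σ, disjoint_left.mpr fun j hj hij => ?_⟩⟩
    exact hσ i hi j (mem_of_mem_erase hj) ((G.mem_neighborFinset i j).mp hij)
  · intro τ hτ
    simp only [indepSets, mem_filter, mem_univ, true_and, disjoint_insert_right] at hτ ⊢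
    exact ⟨hτ.1.insert hτ.2.2, mem_insert_self i τ⟩
  · intro σ hσ
    exact insert_erase (mem_filter.mp hσ).2
  · intro τ hτ
    exact erase_insert (disjoint_insert_right.mp (mem_filter.mp hτ).2).1
  · intro σ hσ
    exact (mul_prod_erase σ lam (mem_filter.mp hσ).2).symm

theorem partitionFn_le_freeWeight_add_sum_activeWeight {lam : V → ℝ} (hlam : ∀ v, 0 ≤ lam v)
    (i : V) :
    partitionFn G lam ≤ freeWeight G lam i + activeWeight G lam i +
      ∑ j ∈ G.neighborFinset i, activeWeight G lam j := by
  have h := sum_le_sum_filter_disjoint_add_sum_sum_filter_mem (indepSets G)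
    (insert i (G.neighborFinset i)) (f := fun σ => ∏ v ∈ σ, lam v)
    fun σ _ => prod_nonneg fun v _ => hlam v
  rwa [sum_insert (G.notMem_neighborFinset_self i), ← add_assoc] at h

theorem fugacity_mul_le_serviceRate {lam : V → ℝ} (hlam : ∀ v, 0 ≤ lam v) (i : V) :
    lam i * (1 - serviceRate G lam i - ∑ j ∈ G.neighborFinset i, serviceRate G lam j)
      ≤ serviceRate G lam i := by
  have hZ : 0 < partitionFn G lam := one_pos.trans_le (one_le_partitionFn G hlam)
  have hfree := partitionFn_le_freeWeight_add_sum_activeWeight G hlam i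
  simp only [serviceRate_eq_div, ← sum_div]
  rw [← div_self hZ.ne', ← sub_div, ← sub_div, mul_div_assoc', div_le_div_iff_of_pos_right hZ]
  calc _ ≤ lam i * freeWeight G lam i := mul_le_mul_of_nonneg_left (by linarith) (hlam i)
    _ = activeWeight G lam i := (activeWeight_eq_mul_freeWeight G lam i).symm

theorem sum_neighbor_add_mul_le_of_mem_coSched {i : V} {c : ℝ} (hc : (G.degree i : ℝ) ≤ c)
    {x : V → ℝ} (hx : x ∈ coSched G) : ∑ j ∈ G.neighborFinset i, x j + c * x i ≤ c := by
  let ℓ : (V → ℝ) →ₗ[ℝ] ℝ :=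
    ∑ j ∈ G.neighborFinset i, LinearMap.proj j + c • LinearMap.proj i
  have hℓ (y : V → ℝ) : ℓ y = ∑ j ∈ G.neighborFinset i, y j + c * y i := by simp [ℓ]
  suffices schedSet G ⊆ {y | ℓ y ≤ c} by
    simpa [hℓ] using convexHull_min this (convex_halfSpace_le ℓ.isLinear c) hx
  rintro _ ⟨s, hs, rfl⟩
  simp only [Set.mem_ofPred_eq, hℓ, indVec]
  by_cases hi : i ∈ s
  · have hnbr : ∀ j ∈ G.neighborFinset i, j ∉ s := fun j hj hjs =>
      hs i hi j hjs ((G.mem_neighborFinset i j).mp hj)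
    simp [hi, sum_ite_of_false hnbr]
  · rw [sum_boole, if_neg hi, mul_zero, add_zero]
    calc _ ≤ ((G.neighborFinset i).card : ℝ) := by exact_mod_cast card_filter_le _ _
      _ ≤ c := by rwa [G.card_neighborFinset_eq_degree]

theorem sum_neighbor_add_mul_lt_of_mem_capIntr {i : V} {c : ℝ} (hc : (G.degree i : ℝ) ≤ c)
    (hc₀ : 0 < c) {μ : V → ℝ} (hμ : μ ∈ capIntr G) :
    ∑ j ∈ G.neighborFinset i, μ j + c * μ i < c := by
  obtain ⟨-, x, hx, hμx⟩ := hμ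
  calc ∑ j ∈ G.neighborFinset i, μ j + c * μ i
      < ∑ j ∈ G.neighborFinset i, x j + c * x i :=
        add_lt_add_of_le_of_lt (sum_le_sum fun j _ => (hμx j).le)
          (mul_lt_mul_of_pos_left (hμx i) hc₀)
    _ ≤ c := sum_neighbor_add_mul_le_of_mem_coSched G hc hx

end HardCore

/-- Corollary 4 of the paper: if `Δ ≥ 2` is the maximum vertex
degree, `ν ∈ (1/Δ)Λ°`, and the fugacities `λ` give service rates exactly equal
to `ν`, then `λ_i ≤ 1/(Δ-1)` for every link `i`. -/
theorem fugacity_bound_maxDegree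
    {V : Type*} [Fintype V] [DecidableEq V]
    (G : SimpleGraph V) [DecidableRel G.Adj]
    (hΔ : 2 ≤ G.maxDegree)
    (ν : V → ℝ)
    (hν : ∃ μ ∈ capIntr G, ν = fun i => (1 / (G.maxDegree : ℝ)) * μ i)
    (lam : V → ℝ) (hlam : ∀ i, 0 < lam i)
    (hs : ∀ i, serviceRate G lam i = ν i) :
    ∀ i, lam i ≤ 1 / ((G.maxDegree : ℝ) - 1) := by
  intro i
  obtain ⟨μ, hμ, rfl⟩ := hν
  set Δ : ℝ := (G.maxDegree : ℝ)
  have hΔ₁ : 1 < Δ := by unfold Δ; exact_mod_cast hΔ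
  have hcapacity := sum_neighbor_add_mul_lt_of_mem_capIntr G (i := i) (c := Δ)
    (Nat.cast_le.mpr (G.degree_le_maxDegree i)) (by linarith) hμ
  have hrate := fugacity_mul_le_serviceRate G (fun v => (hlam v).le) i
  simp only [hs, ← mul_sum] at hrate
  set S := ∑ j ∈ G.neighborFinset i, μ j
  have hrate' : lam i * (Δ - μ i - S) ≤ μ i := by
    have := mul_le_mul_of_nonneg_left hrate (by linarith : (0 : ℝ) ≤ Δ)
    field_simp at this
    linarith
  have key : lam i * (Δ - 1) * μ i < 1 * μ i := by
    have := mul_lt_mul_of_pos_left (by linarith : (Δ - 1) * μ i < Δ - μ i - S) (hlam i)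
    linarith
  rw [le_div_iff₀ (sub_pos.mpr hΔ₁)]
  exact (lt_of_mul_lt_mul_right key (hμ.1 i)).le
end

section
/- For every vector μ in the convex hull Co(Ω) of the feasible schedules of G and every vertex i, the neighborhood sum satisfies Σ_{j∈N_i} μ_j ≤ χ (1 − μ_i), where χ is the interference degree of G. -/
open Finset

variable {V : Type*} [Fintype V] [DecidableEq V]

/-! The inequality is a linear half-space condition on `μ`, so it suffices to check it on the
indicator vector of an independent set `s`. If `i ∈ s`, no neighbour of `i` lies in `s` and both
sides vanish; otherwise the left side counts `N_i ∩ s`, an independent subset of `N_i`. -/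

theorem convex_setOf_sum_le_mul_one_sub {α : Type*} (t : Finset α) (i : α) (c : ℝ) :
    Convex ℝ {x : α → ℝ | ∑ j ∈ t, x j ≤ c * (1 - x i)} := by
  have hlin : IsLinearMap ℝ (fun x : α → ℝ => ∑ j ∈ t, x j + c * x i) :=
    ⟨fun x y => by simp only [Pi.add_apply, sum_add_distrib]; ring,
     fun a x => by simp only [Pi.smul_apply, smul_eq_mul, ← mul_sum]; ring⟩
  simpa only [mul_one_sub, le_sub_iff_add_le] using convex_halfSpace_le hlin c

theorem IsInd.mono {α : Type*} {G : SimpleGraph α} [DecidableRel G.Adj] {s t : Finset α}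
    (hs : IsInd G s) (hts : t ⊆ s) : IsInd G t :=
  fun v hv w hw => hs v (hts hv) w (hts hw)

section

variable {α : Type*} [Fintype α] [DecidableEq α] (G : SimpleGraph α) [DecidableRel G.Adj]

theorem card_neighborFinset_inter_le_intDeg {s : Finset α} (hs : IsInd G s) (i : α) :
    #(G.neighborFinset i ∩ s) ≤ intDeg G i :=
  le_sup (f := card) <| mem_filter.mpr
    ⟨mem_powerset.mpr inter_subset_left, hs.mono inter_subset_right⟩

theorem intDeg_le_intDegG (i : α) : intDeg G i ≤ intDegG G :=
  le_sup (mem_univ i)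

theorem sum_neighborFinset_indVec_le {s : Finset α} (hs : IsInd G s) (i : α) :
    ∑ j ∈ G.neighborFinset i, indVec s j ≤ intDeg G i * (1 - indVec s i) := by
  by_cases hi : i ∈ s
  · have hN : ∀ j ∈ G.neighborFinset i, indVec s j = 0 := fun j hj =>
      if_neg fun hjs => hs i hi j hjs ((G.mem_neighborFinset i j).mp hj)
    rw [sum_eq_zero hN]
    simp [indVec, hi]
  · simp only [indVec, hi, if_false, sub_zero, mul_one]
    rw [sum_boole, filter_mem_eq_inter]
    exact_mod_cast card_neighborFinset_inter_le_intDeg G hs i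

theorem schedSet_subset_setOf_sum_neighborFinset_le (i : α) :
    schedSet G ⊆ {x | ∑ j ∈ G.neighborFinset i, x j ≤ intDegG G * (1 - x i)} := by
  rintro _ ⟨s, hs, rfl⟩
  have hχ : (intDeg G i : ℝ) ≤ intDegG G := by exact_mod_cast intDeg_le_intDegG G i
  have hi : 0 ≤ 1 - indVec s i := by unfold indVec; split_ifs <;> norm_num
  exact (sum_neighborFinset_indVec_le G hs i).trans (mul_le_mul_of_nonneg_right hχ hi)

end

/-- inequality (15) of the paper: every vector `μ` in the
convex hull of the feasible schedules satisfies
`Σ_{j∈N_i} μ_j ≤ χ (1 - μ_i)` for every vertex `i`, where `χ` is the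
interference degree of the graph. -/
theorem neighborhood_sum_le
    {V : Type*} [Fintype V] [DecidableEq V]
    (G : SimpleGraph V) [DecidableRel G.Adj]
    (μ : V → ℝ) (hμ : μ ∈ coSched G) (i : V) :
    ∑ j ∈ G.neighborFinset i, μ j ≤ (intDegG G : ℝ) * (1 - μ i) :=
  convexHull_min (schedSet_subset_setOf_sum_neighborFinset_le G i)
    (convex_setOf_sum_le_mul_one_sub _ i _) hμ
end

section
/- Consider the parallel Glauber dynamics on a complete interference graph with n links and fugacities λ_1,…,λ_n > 0, where the decision schedule is the singleton {i} with probability c_n/n for each link i, with c_n = (1−1/n)^{n−1}, and is empty with the remaining probability 1−c_n. The state space is {0,1,…,n} (state i ≥ 1 means only link i is active, state 0 means no link is active) and the stationary distribution is π(i) = λ_i/Z for i ≥ 1 and π(0) = 1/Z with Z = 1 + Σ_{j=1}^n λ_j. Then for every initial state x' and every t ≥ 0, ||μ_{x',t} − π||_var ≤ γ^t, where γ = 1 − c_min/(n(1+λ_max)), λ_max = max_i λ_i, and c_min = 0.2 (which satisfies c_n ≥ c_min for all n ≥ 1). -/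
open Finset

/-- Distribution at time `t` of a Markov chain with transition matrix `P`
started at state `x`. -/
noncomputable def chainDist {S : Type*} [Fintype S] [DecidableEq S]
    (P : S → S → ℝ) (x : S) : ℕ → S → ℝ
  | 0 => fun s => if s = x then 1 else 0
  | t + 1 => fun s => ∑ s' : S, chainDist P x t s' * P s' s

/-- Total variation distance between two distributions on a finite set. -/
noncomputable def tvDist {S : Type*} [Fintype S] (μ ν : S → ℝ) : ℝ :=
  (1 / 2) * ∑ s : S, |μ s - ν s|

/-- Mixing time: the maximum over starting states in `states` of the first time
the distribution is within `1/e` of `π` in total variation. -/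
noncomputable def mixTime {S : Type*} [Fintype S] [DecidableEq S]
    (P : S → S → ℝ) (π : S → ℝ) (states : Finset S) : ℕ :=
  states.sup fun x => sInf {t : ℕ | tvDist (chainDist P x t) π ≤ 1 / Real.exp 1}

/-- `c_n = (1 - 1/n)^(n-1)`: the probability that a given link is alone in the
decision schedule when every link sends an INTENT message with probability `1/n`. -/
noncomputable def cSel (n : ℕ) : ℝ := (1 - 1 / (n : ℝ)) ^ (n - 1)

/-- The transition matrix of the parallel Glauber dynamics on a complete
interference graph with `n` links: the state `none` means no link is active and
`some i` means only link `i` is active; each singleton decision schedule `{i}`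
is chosen with probability `c_n/n` and the empty decision schedule otherwise. -/
noncomputable def completeP (n : ℕ) (lam : Fin n → ℝ) :
    Option (Fin n) → Option (Fin n) → ℝ
  | none, none => 1 - cSel n + (cSel n / n) * ∑ i : Fin n, 1 / (1 + lam i)
  | none, some i => (cSel n / n) * (lam i / (1 + lam i))
  | some i, none => (cSel n / n) * (1 / (1 + lam i))
  | some i, some j => if i = j then 1 - (cSel n / n) * (1 / (1 + lam i)) else 0

/-- The stationary distribution of the complete-graph dynamics:
`π(i) = λ_i/Z`, `π(0) = 1/Z`, `Z = 1 + Σ_j λ_j`. -/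
noncomputable def completePi (n : ℕ) (lam : Fin n → ℝ) : Option (Fin n) → ℝ
  | none => 1 / (1 + ∑ j : Fin n, lam j)
  | some i => lam i / (1 + ∑ j : Fin n, lam j)

/-! Doeblin's argument. Every transition of the chain enters the empty state with probability at
least `c_n / (n (1 + λ_max))` (for the empty state itself, via the term for any one link), so
`P - α 𝟙_{none}` is a nonnegative kernel with row sums `1 - α`. Since the difference of two
probability vectors has total mass zero, one step of the chain therefore contracts the total
variation distance by `1 - α`. The product-form `π` satisfies detailed balance, hence is
stationary, and `c_n ≥ e⁻¹ ≥ 0.2` because `(1 + 1/m)^m ≤ e`. -/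

open Matrix

lemma cSel_mem_Icc {n : ℕ} (hn : 0 < n) : cSel n ∈ Set.Icc 0 1 := by
  have h : 1 / (n : ℝ) ≤ 1 := div_le_one_of_le₀ (by exact_mod_cast hn) n.cast_nonneg
  have h' : 0 ≤ 1 / (n : ℝ) := by positivity
  exact ⟨pow_nonneg (by linarith) _, pow_le_one₀ (by linarith) (by linarith)⟩

lemma exp_neg_one_le_cSel {n : ℕ} (hn : 0 < n) : Real.exp (-1) ≤ cSel n := by
  obtain ⟨m, rfl⟩ : ∃ m, n = m + 1 := ⟨n - 1, by omega⟩
  rcases Nat.eq_zero_or_pos m with rfl | hm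
  · simp [cSel]
  · have hm' : (0 : ℝ) < m := by exact_mod_cast hm
    have hbase : 1 - 1 / ((m + 1 : ℕ) : ℝ) = (1 + (m : ℝ)⁻¹)⁻¹ := by
      push_cast; field_simp; ring
    rw [cSel, hbase, Nat.add_sub_cancel, inv_pow, Real.exp_neg]
    exact inv_anti₀ (by positivity) Real.one_add_inv_pow_le_exp

lemma one_fifth_le_cSel {n : ℕ} (hn : 0 < n) : (0.2 : ℝ) ≤ cSel n := by
  refine le_trans ?_ (exp_neg_one_le_cSel hn)
  rw [Real.exp_neg]
  have := Real.exp_one_lt_d9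
  rw [le_inv_comm₀ (by norm_num) (Real.exp_pos 1)]
  linarith

section MarkovChain

variable {S : Type*} [Fintype S]

lemma sum_abs_vecMul_le {Q : S → S → ℝ} {r : ℝ} (hQ : ∀ x s, 0 ≤ Q x s)
    (hrow : ∀ x, ∑ s, Q x s = r) (f : S → ℝ) :
    ∑ s, |(f ᵥ* Q) s| ≤ r * ∑ x, |f x| :=
  calc ∑ s, |(f ᵥ* Q) s| ≤ ∑ s, ∑ x, |f x| * Q x s := by
        refine Finset.sum_le_sum fun s _ => (Finset.abs_sum_le_sum_abs _ _).trans_eq ?_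
        simp only [abs_mul, abs_of_nonneg (hQ _ s)]
    _ = r * ∑ x, |f x| := by
        rw [Finset.sum_comm, Finset.mul_sum]
        simp only [← Finset.mul_sum, hrow, mul_comm r]

lemma tvDist_le_one {μ ν : S → ℝ} (hμ : μ ∈ stdSimplex ℝ S) (hν : ν ∈ stdSimplex ℝ S) :
    tvDist μ ν ≤ 1 := by
  have h : ∑ s, |μ s - ν s| ≤ ∑ s, (μ s + ν s) := Finset.sum_le_sum fun s _ =>
    (abs_sub _ _).trans_eq (by rw [abs_of_nonneg (hμ.1 s), abs_of_nonneg (hν.1 s)])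
  rw [Finset.sum_add_distrib, hμ.2, hν.2] at h
  unfold tvDist
  linarith

variable [DecidableEq S]

lemma sum_vecMul_of_mem_rowStochastic {P : S → S → ℝ} (hP : P ∈ rowStochastic ℝ S)
    (μ : S → ℝ) : ∑ s, (μ ᵥ* P) s = ∑ s, μ s := by
  simp only [vecMul, dotProduct]
  rw [Finset.sum_comm]
  simp only [← Finset.mul_sum, sum_row_of_mem_rowStochastic hP, mul_one]

lemma vecMul_mem_stdSimplex {P : S → S → ℝ} (hP : P ∈ rowStochastic ℝ S) {μ : S → ℝ}
    (hμ : μ ∈ stdSimplex ℝ S) : μ ᵥ* P ∈ stdSimplex ℝ S :=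
  ⟨nonneg_vecMul_of_mem_rowStochastic hP hμ.1, (sum_vecMul_of_mem_rowStochastic hP μ).trans hμ.2⟩

lemma sum_abs_vecMul_le_of_minorization {P : S → S → ℝ} (hP : P ∈ rowStochastic ℝ S)
    {s₀ : S} {α : ℝ} (hmin : ∀ x, α ≤ P x s₀) {f : S → ℝ} (hf : ∑ x, f x = 0) :
    ∑ s, |(f ᵥ* P) s| ≤ (1 - α) * ∑ x, |f x| := by
  -- Removing the mass `α` that every row puts on `s₀` leaves `f ᵥ* P` unchanged, since `f` has
  -- total mass zero, and leaves a nonnegative kernel with row sums `1 - α`.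
  set Q : S → S → ℝ := fun x s => P x s - if s = s₀ then α else 0
  have hQ : ∀ x s, 0 ≤ Q x s := by
    intro x s
    by_cases hs : s = s₀
    · subst hs; simpa [Q] using hmin x
    · simpa [Q, hs] using nonneg_of_mem_rowStochastic hP
  have hrow : ∀ x, ∑ s, Q x s = 1 - α := by
    intro x
    simp [Q, Finset.sum_sub_distrib, sum_row_of_mem_rowStochastic hP]
  have hfQ : f ᵥ* Q = f ᵥ* P := by
    ext s
    simp [Q, vecMul, dotProduct, mul_sub, Finset.sum_sub_distrib, ← Finset.sum_mul, hf]
  rw [← hfQ]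
  exact sum_abs_vecMul_le hQ hrow f

lemma tvDist_vecMul_le_of_minorization {P : S → S → ℝ} (hP : P ∈ rowStochastic ℝ S)
    {s₀ : S} {α : ℝ} (hmin : ∀ x, α ≤ P x s₀) {μ ν : S → ℝ} (hμν : ∑ s, μ s = ∑ s, ν s) :
    tvDist (μ ᵥ* P) (ν ᵥ* P) ≤ (1 - α) * tvDist μ ν := by
  have h := sum_abs_vecMul_le_of_minorization hP hmin (f := μ - ν)
    (by simp [Finset.sum_sub_distrib, hμν])
  rw [show (μ - ν) ᵥ* P = μ ᵥ* P - ν ᵥ* P from sub_vecMul _ _ _] at h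
  simp only [Pi.sub_apply] at h
  unfold tvDist
  linarith

lemma chainDist_zero (P : S → S → ℝ) (x : S) :
    chainDist P x 0 = Pi.single x 1 := by
  ext s
  simp [chainDist, Pi.single_apply]

lemma chainDist_succ (P : S → S → ℝ) (x : S) (t : ℕ) :
    chainDist P x (t + 1) = chainDist P x t ᵥ* P :=
  rfl

lemma chainDist_mem_stdSimplex {P : S → S → ℝ} (hP : P ∈ rowStochastic ℝ S) (x : S) (t : ℕ) :
    chainDist P x t ∈ stdSimplex ℝ S := by
  induction t with
  | zero => rw [chainDist_zero]; exact single_mem_stdSimplex ℝ x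
  | succ t ih => rw [chainDist_succ]; exact vecMul_mem_stdSimplex hP ih

theorem tvDist_chainDist_le_pow_of_minorization {P : S → S → ℝ} (hP : P ∈ rowStochastic ℝ S)
    {π : S → ℝ} (hπ : π ∈ stdSimplex ℝ S) (hstat : π ᵥ* P = π)
    {s₀ : S} {α : ℝ} (hmin : ∀ x, α ≤ P x s₀) (x : S) (t : ℕ) :
    tvDist (chainDist P x t) π ≤ (1 - α) ^ t := by
  have hα : 0 ≤ 1 - α := sub_nonneg.2 ((hmin x).trans (le_one_of_mem_rowStochastic hP))
  induction t with
  | zero => simpa using tvDist_le_one (chainDist_mem_stdSimplex hP x 0) hπ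
  | succ t ih =>
    calc tvDist (chainDist P x (t + 1)) π = tvDist (chainDist P x t ᵥ* P) (π ᵥ* P) := by
          rw [chainDist_succ, hstat]
      _ ≤ (1 - α) * tvDist (chainDist P x t) π :=
          tvDist_vecMul_le_of_minorization hP hmin
            ((chainDist_mem_stdSimplex hP x t).2.trans hπ.2.symm)
      _ ≤ (1 - α) ^ (t + 1) := by
          rw [pow_succ']; exact mul_le_mul_of_nonneg_left ih hα

lemma vecMul_eq_self_of_reversible {P : S → S → ℝ} (hP : P ∈ rowStochastic ℝ S) {π : S → ℝ}
    (hrev : ∀ x y, π x * P x y = π y * P y x) : π ᵥ* P = π := by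
  ext y
  simp only [vecMul, dotProduct, hrev _ y, ← Finset.mul_sum, sum_row_of_mem_rowStochastic hP,
    mul_one]

end MarkovChain

section CompleteGraph

variable {n : ℕ} {lam : Fin n → ℝ}

lemma completeP_mem_rowStochastic (hn : 0 < n) (hlam : ∀ i, 0 < lam i) :
    completeP n lam ∈ rowStochastic ℝ (Option (Fin n)) := by
  obtain ⟨hc0, hc1⟩ := cSel_mem_Icc hn
  have hn' : (0 : ℝ) < n := by exact_mod_cast hn
  have hlam1 : ∀ i, 0 < 1 + lam i := fun i => by linarith [hlam i]
  have hleave : ∀ i, cSel n / n * (1 / (1 + lam i)) ≤ cSel n := fun i => by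
    have h1 : 1 / (1 + lam i) ≤ 1 := div_le_one_of_le₀ (by linarith [hlam i]) (hlam1 i).le
    have h2 : cSel n / n ≤ cSel n := div_le_self hc0 (by exact_mod_cast hn)
    calc cSel n / n * (1 / (1 + lam i)) ≤ cSel n / n * 1 := by gcongr
      _ ≤ cSel n := by rwa [mul_one]
  refine mem_rowStochastic_iff_sum.2 ⟨?_, ?_⟩
  · rintro (_ | i) (_ | j) <;> simp only [completeP]
    · have : 0 ≤ ∑ i : Fin n, 1 / (1 + lam i) :=
        Finset.sum_nonneg fun i _ => (one_div_pos.2 (hlam1 i)).le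
      have : 0 ≤ 1 - cSel n := by linarith
      positivity
    · have := hlam j; have := hlam1 j; positivity
    · have := hlam1 i; positivity
    · split_ifs
      · linarith [hleave i]
      · rfl
  · rintro (_ | i) <;> simp only [Fintype.sum_option, completeP]
    · have hpair : ∀ i, 1 / (1 + lam i) + lam i / (1 + lam i) = 1 := fun i => by
        field_simp [(hlam1 i).ne']
      rw [add_assoc, ← Finset.mul_sum, ← mul_add, ← Finset.sum_add_distrib,
        Finset.sum_congr rfl fun i _ => hpair i]
      simp only [Finset.sum_const, Finset.card_univ, Fintype.card_fin, nsmul_eq_mul, mul_one]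
      field_simp
      ring
    · simp

lemma completePi_mem_stdSimplex (hlam : ∀ i, 0 < lam i) :
    completePi n lam ∈ stdSimplex ℝ (Option (Fin n)) := by
  have hZ : 0 < 1 + ∑ j : Fin n, lam j := by
    linarith [Finset.sum_nonneg fun j (_ : j ∈ Finset.univ) => (hlam j).le]
  refine ⟨?_, ?_⟩
  · rintro (_ | i) <;> simp only [completePi]
    · positivity
    · have := hlam i; positivity
  · rw [Fintype.sum_option]
    simp only [completePi, ← Finset.sum_div]
    field_simp

lemma completePi_mul_completeP_comm (x y : Option (Fin n)) :
    completePi n lam x * completeP n lam x y = completePi n lam y * completeP n lam y x := by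
  rcases x with _ | i <;> rcases y with _ | j <;> simp only [completePi, completeP]
  · ring
  · ring
  · obtain rfl | hij := eq_or_ne i j
    · rfl
    · simp [hij, hij.symm]

lemma completePi_vecMul_completeP (hn : 0 < n) (hlam : ∀ i, 0 < lam i) :
    completePi n lam ᵥ* completeP n lam = completePi n lam :=
  vecMul_eq_self_of_reversible (completeP_mem_rowStochastic hn hlam) completePi_mul_completeP_comm

lemma cSel_div_le_completeP_none (hn : 0 < n) (hlam : ∀ i, 0 < lam i) {M : ℝ}
    (hM : ∀ i, lam i ≤ M) (x : Option (Fin n)) :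
    cSel n / (n * (1 + M)) ≤ completeP n lam x none := by
  obtain ⟨hc0, hc1⟩ := cSel_mem_Icc hn
  have hlam1 : ∀ i, 0 < 1 + lam i := fun i => by linarith [hlam i]
  have hsel : ∀ i, cSel n / (n * (1 + M)) ≤ cSel n / n * (1 / (1 + lam i)) := fun i => by
    rw [div_mul_div_comm, mul_one]
    have : (0 : ℝ) < n := by exact_mod_cast hn
    gcongr
    · exact mul_pos this (hlam1 i)
    · exact hM i
  rcases x with _ | i
  · let i₀ : Fin n := ⟨0, hn⟩
    have hsingle : 1 / (1 + lam i₀) ≤ ∑ i, 1 / (1 + lam i) :=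
      Finset.single_le_sum (fun i _ => (one_div_pos.2 (hlam1 i)).le) (Finset.mem_univ i₀)
    have hc : 0 ≤ cSel n / n := by positivity
    calc cSel n / (n * (1 + M)) ≤ cSel n / n * (1 / (1 + lam i₀)) := hsel i₀
      _ ≤ cSel n / n * ∑ i, 1 / (1 + lam i) := by gcongr
      _ ≤ completeP n lam none none := by simp only [completeP]; linarith
  · exact hsel i

end CompleteGraph

/-- Lemma 5 of the paper: on the complete interference graph
with `n ≥ 1` links, the PGD converges geometrically to `π`: for every initial
state and every `t`, `‖μ_{x',t} - π‖_var ≤ γ^t` with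
`γ = 1 - c_min/(n(1+λ_max))`, `c_min = 0.2`; moreover `c_n ≥ c_min`. -/
theorem complete_graph_geometric_mixing
    (n : ℕ) (hn : 0 < n)
    (lam : Fin n → ℝ) (hlam : ∀ i, 0 < lam i) :
    (0.2 : ℝ) ≤ cSel n ∧
    ∀ (x' : Option (Fin n)) (t : ℕ),
      tvDist (chainDist (completeP n lam) x' t) (completePi n lam) ≤
        (1 - 0.2 / ((n : ℝ) *
          (1 + Finset.univ.sup' ⟨⟨0, hn⟩, Finset.mem_univ _⟩ lam))) ^ t := by
  set M := Finset.univ.sup' ⟨⟨0, hn⟩, Finset.mem_univ _⟩ lam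
  have hM : ∀ i, lam i ≤ M := fun i => Finset.le_sup' lam (Finset.mem_univ i)
  have hc := one_fifth_le_cSel hn
  refine ⟨hc, tvDist_chainDist_le_pow_of_minorization (completeP_mem_rowStochastic hn hlam)
    (completePi_mem_stdSimplex hlam) (completePi_vecMul_completeP hn hlam) (s₀ := none) fun x => ?_⟩
  have hM0 : 0 < 1 + M := by linarith [hlam ⟨0, hn⟩, hM ⟨0, hn⟩]
  calc 0.2 / ((n : ℝ) * (1 + M)) ≤ cSel n / (n * (1 + M)) := by gcongr
    _ ≤ completeP n lam x none := cSel_div_le_completeP_none hn hlam hM x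
end
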